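/- arXiv:2312.16518 — 2 statements merged into one kernel-verified Lean document; each statement's English description precedes it below -/
import Mathlib

section
/- For every S ∈ V and all X, Y, P, Q ∈ E, the quadrilinear form T_S satisfies: T_S(X,Y,P,Q) = T_S(Y,X,P,Q); T_S(X,Y,P,Q) = T_S(X,Y,Q,P); T_S(X,Y,P,Q) = T_S(P,Q,X,Y); and the first Bianchi identity T_S(X,Y,P,Q) + T_S(Y,P,X,Q) + T_S(P,X,Y,Q) = 0. -/
open scoped Quaternion RealInnerProductSpace

noncomputable section

/-- `E n = ℍ^{n+1}` as a real inner product space. -/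
abbrev E (n : ℕ) := PiLp 2 (fun _ : Fin (n + 1) => ℍ)

/-- Componentwise right multiplication by the quaternion `q`, as a real-linear map. -/
def Rmul (n : ℕ) (q : ℍ) : E n →ₗ[ℝ] E n where
  toFun X := WithLp.toLp 2 (fun s => X s * q)
  map_add' X Y := by refine PiLp.ext fun s => ?_; simp [add_mul]
  map_smul' c X := by refine PiLp.ext fun s => ?_; simp [smul_mul_assoc]

/-- The three complex structures `J₁, J₂, J₃ = J₁ ∘ J₂`. -/
def Js (n : ℕ) : Fin 3 → (E n →ₗ[ℝ] E n) :=
  ![Rmul n ⟨0, 1, 0, 0⟩, Rmul n ⟨0, 0, 1, 0⟩, Rmul n ⟨0, 1, 0, 0⟩ ∘ₗ Rmul n ⟨0, 0, 1, 0⟩]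

/-- `S` belongs to `V`: it is self-adjoint and commutes with `J₁, J₂, J₃`. -/
def InV (n : ℕ) (S : E n →ₗ[ℝ] E n) : Prop :=
  (∀ X Y : E n, ⟪S X, Y⟫ = ⟪X, S Y⟫) ∧
    (∀ α : Fin 3, S ∘ₗ Js n α = Js n α ∘ₗ S)

/-- The quadrilinear form `T_S`. -/
def T (n : ℕ) (S : E n →ₗ[ℝ] E n) (X Y P Q : E n) : ℝ :=
  (1 / 2) * ∑ α : Fin 3,
    (⟪S (Js n α X), P⟫ * ⟪S (Js n α Y), Q⟫ +
      ⟪S (Js n α X), Q⟫ * ⟪S (Js n α Y), P⟫)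


lemma hmul_skew (q : ℍ) (hq : q.re = 0) (a b : ℍ) : ⟪a * q, b⟫ = -⟪a, b * q⟫ := by
  simp only [Quaternion.inner_def, star_mul]
  simp [Quaternion.re_mul, Quaternion.imI_mul, Quaternion.imJ_mul, Quaternion.imK_mul, hq]
  ring

lemma Rmul_skew (n : ℕ) (q : ℍ) (hq : q.re = 0) (X Y : E n) :
    ⟪Rmul n q X, Y⟫ = -⟪X, Rmul n q Y⟫ := by
  simp only [Rmul, LinearMap.coe_mk, AddHom.coe_mk, PiLp.inner_apply, ← Finset.sum_neg_distrib]
  exact Finset.sum_congr rfl fun s _ => hmul_skew q hq _ _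

lemma Rmul_comp (n : ℕ) (p q : ℍ) : Rmul n p ∘ₗ Rmul n q = Rmul n (q * p) := by
  apply LinearMap.ext; intro X; refine PiLp.ext fun s => ?_
  simp [Rmul, mul_assoc]

lemma Js_skew (n : ℕ) (α : Fin 3) (X Y : E n) : ⟪Js n α X, Y⟫ = -⟪X, Js n α Y⟫ := by
  fin_cases α
  · exact Rmul_skew n (⟨0, 1, 0, 0⟩ : ℍ) rfl X Y
  · exact Rmul_skew n (⟨0, 0, 1, 0⟩ : ℍ) rfl X Y
  · show ⟪(Rmul n (⟨0,1,0,0⟩ : ℍ) ∘ₗ Rmul n (⟨0,0,1,0⟩ : ℍ)) X, Y⟫ = -⟪X, (Rmul n (⟨0,1,0,0⟩ : ℍ) ∘ₗ Rmul n (⟨0,0,1,0⟩ : ℍ)) Y⟫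
    erw [Rmul_comp]
    exact Rmul_skew n _ ((QuaternionAlgebra.re_mul _ _).trans (by norm_num)) X Y

/-- For every `S ∈ V` and all `X, Y, P, Q ∈ E`, the quadrilinear form `T_S`
is symmetric in its first two arguments, in its last two arguments, under exchanging the
first pair with the second pair, and satisfies the first Bianchi identity. -/
theorem stmt0 (n : ℕ) (S : E n →ₗ[ℝ] E n) (hS : InV n S) (X Y P Q : E n) :
    T n S X Y P Q = T n S Y X P Q ∧
    T n S X Y P Q = T n S X Y Q P ∧
    T n S X Y P Q = T n S P Q X Y ∧
    T n S X Y P Q + T n S Y P X Q + T n S P X Y Q = 0 := by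
  have key : ∀ (α : Fin 3) (Z W : E n), ⟪S (Js n α Z), W⟫ = -⟪S (Js n α W), Z⟫ := by
    intro α Z W
    have hc : S (Js n α Z) = Js n α (S Z) := LinearMap.congr_fun (hS.2 α) Z
    rw [hc, Js_skew, hS.1, real_inner_comm]
  refine ⟨?_, ?_, ?_, ?_⟩
  · unfold T
    congr 1
    exact Finset.sum_congr rfl fun α _ => by ring
  · unfold T
    congr 1
    exact Finset.sum_congr rfl fun α _ => by ring
  · unfold T
    congr 1
    refine Finset.sum_congr rfl fun α _ => ?_
    rw [key α P X, key α P Y, key α Q X, key α Q Y]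
    ring
  · unfold T
    rw [← mul_add, ← mul_add, ← Finset.sum_add_distrib, ← Finset.sum_add_distrib]
    rw [Finset.sum_eq_zero, mul_zero]
    intro α _
    rw [key α Y X, key α P X, key α P Y]
    ring
end
end

section
/- For every S ∈ V, every quaternion q with ‖q‖ = 1, and all X, Y, P, Q ∈ E, one has T_S(R_q X, R_q Y, R_q P, R_q Q) = T_S(X, Y, P, Q), where R_q : E → E denotes componentwise right multiplication by q. In other words, the tensor T_S is invariant under the Sp(1)-action on E by right scalar multiplication by unit quaternions. -/
open scoped Quaternion RealInnerProductSpace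

noncomputable section

namespace Sp1Aux

variable {n : ℕ}

lemma Rmul_Rmul (p r : ℍ) (x : E n) : Rmul n p (Rmul n r x) = Rmul n (r * p) x := by
  refine PiLp.ext fun s => ?_
  show (x s * r) * p = x s * (r * p)
  exact mul_assoc _ _ _

lemma re_mul_mk (a : ℍ) (b1 b2 b3 b4 : ℝ) :
    (a * ⟨b1,b2,b3,b4⟩).re = a.re * b1 - a.imI * b2 - a.imJ * b3 - a.imK * b4 :=
  Quaternion.re_mul _ _

lemma imI_mul_mk (a : ℍ) (b1 b2 b3 b4 : ℝ) :
    (a * ⟨b1,b2,b3,b4⟩).imI = a.re * b2 + a.imI * b1 + a.imJ * b4 - a.imK * b3 :=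
  Quaternion.imI_mul _ _

lemma imJ_mul_mk (a : ℍ) (b1 b2 b3 b4 : ℝ) :
    (a * ⟨b1,b2,b3,b4⟩).imJ = a.re * b3 - a.imI * b4 + a.imJ * b1 + a.imK * b2 :=
  Quaternion.imJ_mul _ _

lemma imK_mul_mk (a : ℍ) (b1 b2 b3 b4 : ℝ) :
    (a * ⟨b1,b2,b3,b4⟩).imK = a.re * b4 + a.imI * b3 - a.imJ * b2 + a.imK * b1 :=
  Quaternion.imK_mul _ _

lemma quat_decomp (x p : ℍ) :
    x * p = p.re • x + p.imI • (x * ⟨0,1,0,0⟩) + p.imJ • (x * ⟨0,0,1,0⟩)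
      - p.imK • ((x * ⟨0,0,1,0⟩) * ⟨0,1,0,0⟩) := by
  ext <;>
    simp [Quaternion.re_mul, Quaternion.imI_mul, Quaternion.imJ_mul, Quaternion.imK_mul,
      re_mul_mk, imI_mul_mk, imJ_mul_mk, imK_mul_mk] <;>
    ring

lemma Rmul_decomp (p : ℍ) (x : E n) :
    Rmul n p x = p.re • x + p.imI • Js n 0 x + p.imJ • Js n 1 x - p.imK • Js n 2 x := by
  refine PiLp.ext fun s => ?_
  simp only [Js, Matrix.cons_val_zero, Matrix.cons_val_one, Matrix.head_cons,
    Matrix.cons_val_two, Matrix.tail_cons, LinearMap.comp_apply, PiLp.add_apply,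
    PiLp.sub_apply, PiLp.smul_apply, Rmul, LinearMap.coe_mk, AddHom.coe_mk]
  exact quat_decomp (x s) p

lemma Js_comm {S : E n →ₗ[ℝ] E n} (hS : InV n S) (α : Fin 3) (x : E n) :
    S (Js n α x) = Js n α (S x) :=
  DFunLike.congr_fun (hS.2 α) x

lemma S_comm {S : E n →ₗ[ℝ] E n} (hS : InV n S) (p : ℍ) (x : E n) :
    S (Rmul n p x) = Rmul n p (S x) := by
  rw [Rmul_decomp, Rmul_decomp]
  simp [map_add, map_sub, map_smul, Js_comm hS]

lemma inner_Rmul_left (p : ℍ) (x y : E n) :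
    ⟪Rmul n p x, y⟫ = ⟪x, Rmul n (star p) y⟫ := by
  simp only [PiLp.inner_apply, Quaternion.inner_def]
  refine Finset.sum_congr rfl fun s _ => ?_
  show ((x s * p) * star (y s)).re = (x s * star (y s * star p)).re
  rw [star_mul, star_star, mul_assoc]

lemma inner_Rmul_right (p : ℍ) (x y : E n) :
    ⟪x, Rmul n p y⟫ = ⟪Rmul n (star p) x, y⟫ := by
  rw [inner_Rmul_left, star_star]

lemma key {S : E n →ₗ[ℝ] E n} (hS : InV n S) (p q : ℍ) (Z W : E n) :
    ⟪S (Rmul n p Z), Rmul n q W⟫ =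
      (p * star q).re * ⟪S Z, W⟫ + (p * star q).imI * ⟪S (Js n 0 Z), W⟫ +
        (p * star q).imJ * ⟪S (Js n 1 Z), W⟫ - (p * star q).imK * ⟪S (Js n 2 Z), W⟫ := by
  rw [S_comm hS, inner_Rmul_left, Rmul_Rmul, inner_Rmul_right, star_mul, star_star,
    Rmul_decomp]
  simp only [inner_add_left, inner_sub_left, real_inner_smul_left]
  simp only [← Js_comm hS]

end Sp1Aux

open Sp1Aux


/-- `Sp(1)`-invariance of `T_S`: for every `S ∈ V`, every unit quaternion
`q`, and all `X, Y, P, Q ∈ E`, the tensor `T_S` is invariant under componentwise right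
multiplication by `q`. -/
theorem stmt2 (n : ℕ) (S : E n →ₗ[ℝ] E n) (hS : InV n S) (q : ℍ) (hq : ‖q‖ = 1)
    (X Y P Q : E n) :
    T n S (Rmul n q X) (Rmul n q Y) (Rmul n q P) (Rmul n q Q) = T n S X Y P Q := by
  have hk : q.re ^ 2 + q.imI ^ 2 + q.imJ ^ 2 + q.imK ^ 2 = 1 := by
    have h := Quaternion.normSq_eq_norm_mul_self q
    rw [hq, Quaternion.normSq_def'] at h
    simpa using h
  have j0 : ∀ Z : E n, Js n 0 (Rmul n q Z) = Rmul n (q * ⟨0,1,0,0⟩) Z := fun Z =>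
    Rmul_Rmul _ _ _
  have j1 : ∀ Z : E n, Js n 1 (Rmul n q Z) = Rmul n (q * ⟨0,0,1,0⟩) Z := fun Z =>
    Rmul_Rmul _ _ _
  have j2 : ∀ Z : E n, Js n 2 (Rmul n q Z) = Rmul n ((q * ⟨0,0,1,0⟩) * ⟨0,1,0,0⟩) Z := by
    intro Z
    show Rmul n ⟨0,1,0,0⟩ (Rmul n ⟨0,0,1,0⟩ (Rmul n q Z)) = _
    exact (congrArg (Rmul n _) (Rmul_Rmul _ _ _)).trans (Rmul_Rmul _ _ _)
  simp only [T, Fin.sum_univ_three, j0, j1, j2, key hS]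
  simp only [Quaternion.re_mul, Quaternion.imI_mul, Quaternion.imJ_mul, Quaternion.imK_mul,
    re_mul_mk, imI_mul_mk, imJ_mul_mk, imK_mul_mk, Quaternion.re_star, Quaternion.imI_star, Quaternion.imJ_star, Quaternion.imK_star]
  linear_combination ((q.re ^ 2 + q.imI ^ 2 + q.imJ ^ 2 + q.imK ^ 2 + 1) * (1 / 2 *
    (⟪S (Js n 0 X), P⟫ * ⟪S (Js n 0 Y), Q⟫ + ⟪S (Js n 0 X), Q⟫ * ⟪S (Js n 0 Y), P⟫ +
      (⟪S (Js n 1 X), P⟫ * ⟪S (Js n 1 Y), Q⟫ + ⟪S (Js n 1 X), Q⟫ * ⟪S (Js n 1 Y), P⟫) +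
      (⟪S (Js n 2 X), P⟫ * ⟪S (Js n 2 Y), Q⟫ + ⟪S (Js n 2 X), Q⟫ * ⟪S (Js n 2 Y), P⟫)))) * hk
end
end
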